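/- arXiv:2412.14854 — 2 statements merged into one kernel-verified Lean document; each statement's English description precedes it below -/
import Mathlib

section
/- If the common descent direction d(x) = -∑ₖ wₖ ∇fₖ(x) is nonzero, where w minimizes ‖∑ₖ ŵₖ ∇fₖ(x)‖² over the probability simplex, then d(x) is a descent direction for every objective: (∇fₖ(x))ᵀ d(x) < 0 for all k. -/
open RealInnerProductSpace

/-- If the common descent direction `d = -∑ₖ wₖ ∇fₖ(x)` is nonzero, where `w` minimizes
`‖∑ₖ ŵₖ ∇fₖ(x)‖²` over the probability simplex, then `d` is a descent direction for every
objective: `⟨∇fₖ(x), d⟩ < 0` for all `k`. -/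
theorem common_descent_direction {N K : ℕ}
    (f : Fin K → EuclideanSpace ℝ (Fin N) → ℝ)
    (x : EuclideanSpace ℝ (Fin N))
    (hf : ∀ k, DifferentiableAt ℝ (f k) x)
    (w : Fin K → ℝ) (hw0 : ∀ k, 0 ≤ w k) (hw1 : ∑ k, w k = 1)
    (hmin : ∀ v : Fin K → ℝ, (∀ k, 0 ≤ v k) → ∑ k, v k = 1 →
      ‖∑ k, w k • gradient (f k) x‖ ^ 2 ≤ ‖∑ k, v k • gradient (f k) x‖ ^ 2)
    (d : EuclideanSpace ℝ (Fin N))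
    (hd : d = -∑ k, w k • gradient (f k) x)
    (hdne : d ≠ 0) :
    ∀ k, ⟪gradient (f k) x, d⟫ < 0 := by
  intro k
  set g : EuclideanSpace ℝ (Fin N) := ∑ j, w j • gradient (f j) x with hg
  set gk : EuclideanSpace ℝ (Fin N) := gradient (f k) x with hgk
  have hgne : g ≠ 0 := by
    intro h; apply hdne; rw [hd, h, neg_zero]
  set A : ℝ := ‖g‖ ^ 2 with hA
  set B : ℝ := ‖gk‖ ^ 2 with hB
  have hApos : 0 < A := by
    have : 0 < ‖g‖ := norm_pos_iff.mpr hgne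
    positivity
  have hBnn : 0 ≤ B := by positivity
  have hden : 0 < 2 * A + B := by linarith
  set t : ℝ := A / (2 * A + B) with ht
  have htpos : 0 < t := div_pos hApos hden
  have htle : t ≤ 1 := by
    rw [ht, div_le_one hden]; linarith
  have htA : t * (2 * A + B) = A := div_mul_cancel₀ A (ne_of_gt hden)
  set v : Fin K → ℝ := fun j => (1 - t) * w j + t * (if j = k then 1 else 0) with hv
  have hv0 : ∀ j, 0 ≤ v j := by
    intro j
    by_cases h : j = k
    · subst h
      simp only [hv, if_true, eq_self_iff_true, mul_one]
      nlinarith [hw0 j]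
    · simp only [hv, if_neg h, mul_zero, add_zero]
      nlinarith [hw0 j]
  have hv1 : ∑ j, v j = 1 := by
    simp only [hv]
    rw [Finset.sum_add_distrib, ← Finset.mul_sum, hw1, ← Finset.mul_sum]
    rw [Finset.sum_ite_eq' Finset.univ k (fun _ => (1:ℝ))]
    simp
  have hsum : ∑ j, v j • gradient (f j) x = (1 - t) • g + t • gk := by
    simp only [hv, add_smul, mul_smul]
    rw [Finset.sum_add_distrib, ← Finset.smul_sum, ← Finset.smul_sum, ← hg]
    congr 1
    simp only [ite_smul, one_smul, zero_smul]
    rw [Finset.sum_ite_eq' Finset.univ k (fun j => gradient (f j) x)]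
    simp [hgk]
  have hkey := hmin v hv0 hv1
  rw [hsum] at hkey
  have hexp : ‖(1 - t) • g + t • gk‖ ^ 2
      = (1 - t) ^ 2 * A + 2 * ((1 - t) * t) * ⟪g, gk⟫ + t ^ 2 * B := by
    rw [norm_add_sq_real, norm_smul, norm_smul, inner_smul_left, inner_smul_right]
    simp only [Real.norm_eq_abs, mul_pow, sq_abs, RCLike.conj_to_real]
    rw [hA, hB]; ring
  rw [hexp] at hkey
  have hc : 0 < ⟪g, gk⟫ := by
    by_contra hc'
    push_neg at hc'
    have htA2 : t * (t * (2 * A + B)) = t * A := by rw [htA]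
    have hprod : 0 ≤ (1 - t) * t * (-⟪g, gk⟫) :=
      mul_nonneg (mul_nonneg (by linarith) htpos.le) (by linarith)
    have htApos : 0 < t * A := mul_pos htpos hApos
    nlinarith [sq_nonneg t]
  have : ⟪gk, d⟫ = -⟪g, gk⟫ := by
    rw [hd, inner_neg_right, real_inner_comm]
  rw [this]
  linarith
end

section
/- The minimizer of ‖∑ₖ ŵₖ gₖ‖² over the probability simplex exists, and if the minimum value is positive with minimizer w, then d = -∑ₖ wₖ gₖ satisfies ⟨gₖ, d⟩ ≤ -‖d‖² < 0 for all k. -/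
open RealInnerProductSpace

/-- The minimizer of `‖∑ₖ ŵₖ gₖ‖²` over the probability simplex exists, and whenever the
minimum value is positive at a minimizer `w`, the direction `d = -∑ₖ wₖ gₖ` satisfies
`⟨gₖ, d⟩ ≤ -‖d‖² < 0` for all `k`. -/
theorem simplex_min_descent {N K : ℕ} (hK : 0 < K)
    (g : Fin K → EuclideanSpace ℝ (Fin N)) :
    (∃ w : Fin K → ℝ, (∀ k, 0 ≤ w k) ∧ (∑ k, w k = 1) ∧
      ∀ v : Fin K → ℝ, (∀ k, 0 ≤ v k) → (∑ k, v k = 1) →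
        ‖∑ k, w k • g k‖ ^ 2 ≤ ‖∑ k, v k • g k‖ ^ 2) ∧
    (∀ w : Fin K → ℝ, (∀ k, 0 ≤ w k) → (∑ k, w k = 1) →
      (∀ v : Fin K → ℝ, (∀ k, 0 ≤ v k) → (∑ k, v k = 1) →
        ‖∑ k, w k • g k‖ ^ 2 ≤ ‖∑ k, v k • g k‖ ^ 2) →
      0 < ‖∑ k, w k • g k‖ ^ 2 →
      ∀ k, ⟪g k, -∑ j, w j • g j⟫ ≤ -‖-∑ j, w j • g j‖ ^ 2 ∧
        -‖-∑ j, w j • g j‖ ^ 2 < 0) := by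
  classical
  constructor
  · -- existence via compactness of the standard simplex
    have hcont : Continuous fun v : Fin K → ℝ => ‖∑ k, v k • g k‖ ^ 2 := by
      apply Continuous.pow
      apply Continuous.norm
      exact continuous_finset_sum _ fun i _ => (continuous_apply i).smul continuous_const
    have hne : (stdSimplex ℝ (Fin K)).Nonempty := by
      refine ⟨fun i => if i = ⟨0, hK⟩ then 1 else 0, fun i => ?_, ?_⟩
      · dsimp only; split <;> norm_num
      · simp
    obtain ⟨w, hwmem, hwmin⟩ :=
      (isCompact_stdSimplex ℝ (Fin K)).exists_isMinOn hne hcont.continuousOn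
    exact ⟨w, hwmem.1, hwmem.2, fun v hv0 hv1 => hwmin (Set.mem_setOf_eq ▸ ⟨hv0, hv1⟩)⟩
  · intro w hw0 hw1 hmin hpos k
    set s := ∑ j, w j • g j with hs
    have key : ∀ t : ℝ, 0 < t → t ≤ 1 →
        0 ≤ 2 * ⟪s, g k - s⟫ + t * ‖g k - s‖ ^ 2 := by
      intro t ht0 ht1
      set v : Fin K → ℝ := fun j => (1 - t) * w j + t * (if j = k then 1 else 0) with hv
      have hv0 : ∀ j, 0 ≤ v j := by
        intro j
        have := hw0 j
        simp only [hv]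
        have h1t : 0 ≤ 1 - t := by linarith
        have : (0:ℝ) ≤ t * (if j = k then 1 else 0) := by
          split <;> nlinarith
        nlinarith [mul_nonneg h1t (hw0 j)]
      have hv1 : ∑ j, v j = 1 := by
        simp only [hv]
        rw [Finset.sum_add_distrib, ← Finset.mul_sum, hw1, ← Finset.mul_sum]
        simp
      have hle := hmin v hv0 hv1
      have hsum : ∑ j, v j • g j = s + t • (g k - s) := by
        have h1 : ∑ j, ((1 - t) * w j) • g j = (1 - t) • s := by
          rw [hs, Finset.smul_sum]
          exact Finset.sum_congr rfl fun j _ => by rw [mul_smul]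
        have h2 : ∑ j, (t * (if j = k then (1:ℝ) else 0)) • g j = t • g k := by
          rw [Finset.sum_eq_single k]
          · simp
          · intro j _ hj; simp [hj]
          · intro h; exact absurd (Finset.mem_univ k) h
        calc ∑ j, v j • g j
            = ∑ j, (((1 - t) * w j) • g j + (t * (if j = k then (1:ℝ) else 0)) • g j) := by
              refine Finset.sum_congr rfl fun j _ => ?_
              simp only [hv]; rw [add_smul]
          _ = (1 - t) • s + t • g k := by rw [Finset.sum_add_distrib, h1, h2]
          _ = s + t • (g k - s) := by module
      rw [hsum, norm_add_sq_real, real_inner_smul_right, norm_smul] at hle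
      have habs : |t| = t := abs_of_pos ht0
      rw [Real.norm_eq_abs, habs] at hle
      have hexp : (t * ‖g k - s‖) ^ 2 = t ^ 2 * ‖g k - s‖ ^ 2 := by ring
      rw [hexp] at hle
      nlinarith [sq_nonneg ‖g k - s‖]
    have hA : 0 ≤ ⟪s, g k - s⟫ := by
      by_contra h
      push_neg at h
      set A := ⟪s, g k - s⟫
      set B := ‖g k - s‖ ^ 2 with hB
      have hB0 : 0 ≤ B := sq_nonneg _
      rcases eq_or_lt_of_le hB0 with hB0' | hB0'
      · have := key 1 one_pos le_rfl
        rw [← hB0'] at this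
        nlinarith
      · have hAB : 0 < -A / B := div_pos (by linarith) hB0'
        set t := min 1 (-A / B) with ht
        have ht0 : 0 < t := lt_min one_pos hAB
        have ht1 : t ≤ 1 := min_le_left _ _
        have htAB : t ≤ -A / B := min_le_right _ _
        have := key t ht0 ht1
        have h1 : t * B ≤ (-A / B) * B := mul_le_mul_of_nonneg_right htAB (le_of_lt hB0')
        have h2 : (-A / B) * B = -A := div_mul_cancel₀ _ (ne_of_gt hB0')
        nlinarith
    have hin : ⟪s, g k⟫ - ‖s‖ ^ 2 = ⟪s, g k - s⟫ := by
      rw [inner_sub_right, real_inner_self_eq_norm_sq]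
    have hcomm : ⟪g k, s⟫ = ⟪s, g k⟫ := real_inner_comm _ _
    constructor
    · rw [inner_neg_right, norm_neg]
      rw [hcomm]
      linarith [hin ▸ hA]
    · rw [norm_neg]
      linarith
end
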